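/- Define p(x) = ∑_{j=⌈k/2⌉}^{k} l·(2j/k − 1)·C(k,j)·(1−x)^j·x^{k−j} for real x ∈ [0,1], integers k ≥ 1, l ≥ 1. If 0 ≤ x < 1/2, then p(x) ≥ l·(x^k + 1 − 2x). -/

import Mathlib

/-!
Writing `b_j = C(k,j) (1-x)^j x^(k-j)` for the binomial distribution with parameter `1 - x`,
the weights `b_j` sum to `1` and have mean `k (1 - x)`, so `∑_{j=0}^{k} (2j/k - 1) b_j = 1 - 2x`.
The omitted terms, those with `2j ≤ k`, are nonpositive, and among them the `j = 0` term is `-x^k`;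
so the remaining terms sum to at least `x^k + 1 - 2x`.
-/

open Finset Polynomial

section Bernstein

variable {R : Type*} [CommRing R]

theorem sum_choose_mul_pow_mul_one_sub_pow (n : ℕ) (y : R) :
    ∑ j ∈ range (n + 1), (n.choose j : R) * y ^ j * (1 - y) ^ (n - j) = 1 := by
  simpa [bernsteinPolynomial, eval_finsetSum] using
    congrArg (eval y) (bernsteinPolynomial.sum R n)

theorem sum_mul_choose_mul_pow_mul_one_sub_pow (n : ℕ) (y : R) :
    ∑ j ∈ range (n + 1), (j : R) * n.choose j * y ^ j * (1 - y) ^ (n - j) = n * y := by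
  simpa [bernsteinPolynomial, eval_finsetSum, mul_assoc] using
    congrArg (eval y) (bernsteinPolynomial.sum_smul R n)

end Bernstein

theorem sum_two_mul_div_sub_one_mul_choose {k : ℕ} (hk : k ≠ 0) (x : ℝ) :
    ∑ j ∈ range (k + 1), (2 * (j : ℝ) / k - 1) * k.choose j * (1 - x) ^ j * x ^ (k - j)
      = 1 - 2 * x := by
  have hmean := sum_mul_choose_mul_pow_mul_one_sub_pow k (1 - x)
  have htotal := sum_choose_mul_pow_mul_one_sub_pow k (1 - x)
  rw [sub_sub_cancel] at hmean htotal
  have hk' : (k : ℝ) ≠ 0 := by exact_mod_cast hk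
  calc _ = 2 / k * ∑ j ∈ range (k + 1), (j : ℝ) * k.choose j * (1 - x) ^ j * x ^ (k - j)
        - ∑ j ∈ range (k + 1), (k.choose j : ℝ) * (1 - x) ^ j * x ^ (k - j) := by
          rw [mul_sum, ← sum_sub_distrib]
          refine sum_congr rfl fun j _ => ?_
          ring
    _ = 1 - 2 * x := by
          rw [hmean, htotal]
          field_simp
          ring

theorem two_mul_div_sub_one_mul_choose_nonpos {k j : ℕ} (hj : 2 * j ≤ k) {x : ℝ}
    (hx0 : 0 ≤ x) (hx1 : x ≤ 1) :
    (2 * (j : ℝ) / k - 1) * k.choose j * (1 - x) ^ j * x ^ (k - j) ≤ 0 := by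
  have hweight : 2 * (j : ℝ) / k - 1 ≤ 0 :=
    sub_nonpos.2 (div_le_one_of_le₀ (by exact_mod_cast hj) k.cast_nonneg)
  have hx1' : 0 ≤ 1 - x := sub_nonneg.2 hx1
  exact mul_nonpos_of_nonpos_of_nonneg
    (mul_nonpos_of_nonpos_of_nonneg (mul_nonpos_of_nonpos_of_nonneg hweight (by positivity))
      (by positivity)) (by positivity)

theorem stmt_5_general (k l : ℕ) (hk : 1 ≤ k) (x : ℝ)
    (hx0 : 0 ≤ x) (hx1 : x < 1 / 2) :
    ∑ j ∈ Finset.Icc ((k + 1) / 2) k,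
        (l : ℝ) * (2 * (j : ℝ) / k - 1) * (k.choose j : ℝ) * (1 - x) ^ j * x ^ (k - j)
      ≥ (l : ℝ) * (x ^ k + 1 - 2 * x) := by
  set f : ℕ → ℝ := fun j => (2 * (j : ℝ) / k - 1) * k.choose j * (1 - x) ^ j * x ^ (k - j)
  have hlow : ∑ j ∈ range ((k + 1) / 2), f j ≤ -x ^ k := by
    rw [sum_eq_add_sum_sdiff_singleton_of_mem (mem_range.2 (by omega : 0 < (k + 1) / 2))]
    have hf0 : f 0 = -x ^ k := by simp [f]
    have hrest : ∑ j ∈ range ((k + 1) / 2) \ {0}, f j ≤ 0 := by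
      refine sum_nonpos fun j hj => two_mul_div_sub_one_mul_choose_nonpos ?_ hx0 (by linarith)
      simp only [mem_sdiff, mem_range, mem_singleton] at hj
      omega
    linarith
  have hsplit := sum_range_add_sum_Ico f (show (k + 1) / 2 ≤ k + 1 by omega)
  rw [Ico_add_one_right_eq_Icc, sum_two_mul_div_sub_one_mul_choose (by omega)] at hsplit
  calc _ = (l : ℝ) * ∑ j ∈ Icc ((k + 1) / 2) k, f j := by
        rw [mul_sum]
        exact sum_congr rfl fun j _ => by ring
    _ ≥ (l : ℝ) * (x ^ k + 1 - 2 * x) := by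
        gcongr
        linarith

/-- For `0 ≤ x < 1/2`, `p(x) = ∑_{j=⌈k/2⌉}^{k} l·(2j/k−1)·C(k,j)·(1−x)^j·x^{k−j}`
satisfies `p(x) ≥ l·(x^k + 1 − 2x)`. -/
theorem stmt_5 (k l : ℕ) (hk : 1 ≤ k) (hl : 1 ≤ l) (x : ℝ)
    (hx0 : 0 ≤ x) (hx1 : x < 1 / 2) :
    ∑ j ∈ Finset.Icc ((k + 1) / 2) k,
        (l : ℝ) * (2 * (j : ℝ) / k - 1) * (k.choose j : ℝ) * (1 - x) ^ j * x ^ (k - j)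
      ≥ (l : ℝ) * (x ^ k + 1 - 2 * x) :=
  stmt_5_general k l hk x hx0 hx1
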